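/- arXiv:2101.04176 — 2 statements merged into one kernel-verified Lean document; each statement's English description precedes it below -/
import Mathlib

section
/- Let n = 4k with k a positive even integer and let 0 < ε ≤ 1/(2n). For σ ∈ {-1,+1}^k, define F_σ : {1,...,n} → ℝ by F_σ(i) = i/n for i even, or i ≤ k, or i ≥ 3k, and F_σ(i) = i/n + σ_{(i-k+1)/2}·α_i·ε otherwise, where α_i = 2 - 4·|i/n - 1/2|. Then F_σ is strictly increasing on {1,...,n}, F_σ(n) = 1, and F_σ(i) ∈ [0,1] for all i; hence F_σ is the CDF of a probability distribution on {1,...,n}. -/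
/-!
Every second point of the grid `i / n` is left unperturbed (all even `i`), and every other point
moves by `σ α_i ε` with `|α_i| < 2` (since `α_i = 2` only at the even point `i = n / 2`), hence by
less than `2ε ≤ 1 / n`, the grid spacing. So each step `F i < F (i + 1)` compares an exact grid
point with a neighbour displaced by less than one spacing. Monotonicity, `F 0 = 0` and `F n = 1`
then confine the values to `[0, 1]`.
-/

theorem strictMono_of_abs_sub_lt_of_even {d : ℝ} {F : ℕ → ℝ}
    (hF : ∀ i, |F i - i * d| < d) (heven : ∀ i, Even i → F i = i * d) : StrictMono F := by
  refine strictMono_nat_of_lt_succ fun i => ?_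
  have hi := abs_lt.1 (hF i)
  have hi1 := abs_lt.1 (hF (i + 1))
  push_cast at hi1
  rcases Nat.even_or_odd i with he | ho
  · rw [heven i he]
    linarith
  · rw [heven (i + 1) ho.add_one]
    push_cast
    linarith

theorem abs_two_sub_four_mul_abs_sub_half_lt_two {x : ℝ} (hx0 : 0 ≤ x) (hx1 : x ≤ 1)
    (hx : x ≠ 1 / 2) : |2 - 4 * (|x - 1 / 2|)| < 2 := by
  have hpos : 0 < |x - 1 / 2| := abs_pos.2 (sub_ne_zero.2 hx)
  have hle : |x - 1 / 2| ≤ 1 / 2 := abs_le.2 ⟨by linarith, by linarith⟩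
  exact abs_lt.2 ⟨by linarith, by linarith⟩

theorem abs_mul_mul_lt_of_abs_le_one {s a ε c : ℝ} (hs : |s| ≤ 1) (ha : |a| < 2) (hε : 0 < ε)
    (hεc : 2 * ε ≤ c) : |s * a * ε| < c :=
  calc |s * a * ε| = |s| * |a| * ε := by rw [abs_mul, abs_mul, abs_of_pos hε]
    _ ≤ |a| * ε := by gcongr; nlinarith [abs_nonneg a]
    _ < 2 * ε := by gcongr
    _ ≤ c := hεc

theorem stmt_10_general (k : ℕ) (hk : 0 < k) (ε : ℝ) (hε : 0 < ε)
    (hε2 : ε ≤ 1 / (2 * (4 * k : ℝ))) (σ : ℕ → ℝ) (hσ : ∀ j, σ j = 1 ∨ σ j = -1) :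
    let n : ℕ := 4 * k
    let α : ℕ → ℝ := fun i => 2 - 4 * |(i : ℝ) / n - 1 / 2|
    let F : ℕ → ℝ := fun i =>
      if i % 2 = 0 ∨ i ≤ k ∨ 3 * k ≤ i then (i : ℝ) / n
      else (i : ℝ) / n + σ ((i - k + 1) / 2) * α i * ε
    StrictMonoOn F (Set.Icc 1 n) ∧ F n = 1 ∧ ∀ i ∈ Set.Icc 1 n, F i ∈ Set.Icc (0 : ℝ) 1 := by
  intro n α F
  have hn : (0 : ℝ) < n := by positivity
  have hσ1 : ∀ j, |σ j| ≤ 1 := fun j => by rcases hσ j with h | h <;> simp [h]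
  have hεn : 2 * ε ≤ 1 / n := by
    linarith [show 1 / (2 * (4 * k : ℝ)) = 1 / n / 2 by push_cast [n]; ring]
  have hgrid : ∀ i, Even i → F i = i * (1 / n) := fun i hi => by
    simp only [F, if_pos (Or.inl (Nat.even_iff.1 hi))]
    exact div_eq_mul_one_div _ _
  have hpert : ∀ i, |F i - i * (1 / n)| < 1 / n := by
    intro i
    by_cases hi : i % 2 = 0 ∨ i ≤ k ∨ 3 * k ≤ i
    · simp only [F, if_pos hi, ← div_eq_mul_one_div, sub_self, abs_zero]
      positivity
    have hin : (i : ℝ) ≤ n := by exact_mod_cast (show i ≤ n by omega)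
    have hhalf : (i : ℝ) / n ≠ 1 / 2 := by
      rw [ne_eq, div_eq_div_iff hn.ne' two_ne_zero]
      exact_mod_cast (show i * 2 ≠ 1 * n by omega)
    simp only [F, if_neg hi, ← div_eq_mul_one_div, add_sub_cancel_left]
    exact abs_mul_mul_lt_of_abs_le_one (hσ1 _) (abs_two_sub_four_mul_abs_sub_half_lt_two
      (by positivity) (div_le_one_of_le₀ hin hn.le) hhalf) hε hεn
  have hmono : StrictMono F := strictMono_of_abs_sub_lt_of_even hpert hgrid
  have hF0 : F 0 = 0 := by simpa using hgrid 0 ⟨0, rfl⟩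
  have hFn : F n = 1 := by rw [hgrid n ⟨2 * k, by omega⟩, mul_one_div_cancel hn.ne']
  refine ⟨hmono.strictMonoOn _, hFn, fun i hi => ⟨?_, ?_⟩⟩
  · exact hF0 ▸ hmono.monotone (Nat.zero_le i)
  · exact hFn ▸ hmono.monotone hi.2

/-- The family of CDFs `F_σ` used in the median-estimation lower bound: for `n = 4k`
with `k` positive and even, `0 < ε ≤ 1/(2n)` and signs `σ`, the function `F_σ` is
strictly increasing on `{1,...,n}`, has `F_σ(n) = 1`, and takes values in `[0,1]`. -/
theorem stmt_10 (k : ℕ) (hk : 0 < k) (hke : Even k) (ε : ℝ) (hε : 0 < ε)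
    (hε2 : ε ≤ 1 / (2 * (4 * k : ℝ))) (σ : ℕ → ℝ) (hσ : ∀ j, σ j = 1 ∨ σ j = -1) :
    let n : ℕ := 4 * k
    let α : ℕ → ℝ := fun i => 2 - 4 * |(i : ℝ) / n - 1 / 2|
    let F : ℕ → ℝ := fun i =>
      if i % 2 = 0 ∨ i ≤ k ∨ 3 * k ≤ i then (i : ℝ) / n
      else (i : ℝ) / n + σ ((i - k + 1) / 2) * α i * ε
    StrictMonoOn F (Set.Icc 1 n) ∧ F n = 1 ∧ ∀ i ∈ Set.Icc 1 n, F i ∈ Set.Icc (0 : ℝ) 1 :=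
  stmt_10_general k hk ε hε hε2 σ hσ
end

section
/- Let w_{1/8}, w_{2/8}, ..., w_{8/8} ∈ {1,...,n} and let F : {0,1,...,n} → [0,1] be a nondecreasing function with F(0) = 0, such that for each τ ∈ {1/8, 2/8, ..., 1}, dist([F(w_τ - 1), F(w_τ)], τ) ≤ 1/8. Define F̂(j) = max{τ ∈ {1/8,...,1} : w_τ ≤ j} (and F̂(j) = 0 if no such τ exists). Then |F̂(j) - F(j)| ≤ 1/4 for every j ∈ {1,...,n} with F̂(j) > 0. -/
lemma quant_aux {a b x : ℝ} (hab : a ≤ b)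
    (h : Metric.infDist x (Set.Icc a b) ≤ 1/8) :
    a ≤ x + 1/8 ∧ x - 1/8 ≤ b := by
  obtain ⟨y, hy, hd⟩ := (isCompact_Icc).exists_infDist_eq_dist
    (Set.nonempty_Icc.2 hab) x
  rw [hd] at h
  rw [Real.dist_eq, abs_sub_comm] at h
  have := abs_le.1 h
  constructor <;> [linarith [hy.1]; linarith [hy.2]]

/-- If each `w_{t/8}` (for `t = 1,...,8`) is a `1/8`-good `t/8`-quantile estimate of a
CDF `F`, then the piecewise-constant estimate `F̂(j) = max{t/8 : w_t ≤ j}` satisfies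
`|F̂(j) - F(j)| ≤ 1/4` wherever `F̂(j) > 0`, and on all of `{1,...,n}` when `w_1 ≤ j`
always holds. -/
theorem stmt_19 (n : ℕ) (F : ℕ → ℝ) (hF0 : F 0 = 0) (hmono : Monotone F)
    (hrange : ∀ i, F i ∈ Set.Icc (0 : ℝ) 1)
    (w : ℕ → ℕ) (hw : ∀ t ∈ Finset.Icc (1:ℕ) 8, w t ∈ Finset.Icc 1 n)
    (hgood : ∀ t ∈ Finset.Icc (1:ℕ) 8,
      Metric.infDist ((t : ℝ) / 8) (Set.Icc (F (w t - 1)) (F (w t))) ≤ 1 / 8) :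
    let Fhat : ℕ → ℝ := fun j =>
      (((((Finset.Icc (1:ℕ) 8).filter (fun t => w t ≤ j)).sup id : ℕ)) : ℝ) / 8
    (∀ j ∈ Finset.Icc 1 n, 0 < Fhat j → |Fhat j - F j| ≤ 1 / 4) ∧
    ((∀ j ∈ Finset.Icc 1 n, w 1 ≤ j) → ∀ j ∈ Finset.Icc 1 n, |Fhat j - F j| ≤ 1 / 4) := by
  intro Fhat
  have key : ∀ j ∈ Finset.Icc 1 n, 0 < Fhat j → |Fhat j - F j| ≤ 1 / 4 := by
    intro j hj hpos
    set S := (Finset.Icc (1:ℕ) 8).filter (fun t => w t ≤ j) with hS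
    set T := S.sup id with hT
    have hFhat : Fhat j = (T : ℝ) / 8 := rfl
    have hTpos : 0 < T := by
      by_contra h
      push_neg at h
      interval_cases T
      simp [hFhat] at hpos
    have hSne : S.Nonempty := by
      rcases Finset.eq_empty_or_nonempty S with h | h
      · rw [hT, h] at hTpos; simp at hTpos
      · exact h
    have hTmem : T ∈ S := by
      obtain ⟨t, ht, hteq⟩ := Finset.exists_mem_eq_sup S hSne id
      simpa [hT, hteq] using ht
    have hTIcc : T ∈ Finset.Icc (1:ℕ) 8 := Finset.mem_filter.1 hTmem |>.1
    have hwTj : w T ≤ j := (Finset.mem_filter.1 hTmem).2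
    have hT8 : T ≤ 8 := (Finset.mem_Icc.1 hTIcc).2
    -- lower bound on F j
    have haux := quant_aux (hmono (Nat.sub_le _ _)) (hgood T hTIcc)
    have hlow : (T : ℝ) / 8 - 1/8 ≤ F j :=
      le_trans haux.2 (hmono hwTj)
    -- upper bound on F j
    have hup : F j ≤ (T : ℝ) / 8 + 1/4 := by
      rcases eq_or_lt_of_le hT8 with h8 | h8
      · have h1 := (hrange j).2
        have hT8' : (T:ℝ) = 8 := by exact_mod_cast h8
        rw [hT8']; linarith
      · -- T+1 ∈ Icc 1 8 and w (T+1) > j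
        have hT1 : T + 1 ∈ Finset.Icc (1:ℕ) 8 := Finset.mem_Icc.2 ⟨Nat.le_add_left 1 T, h8⟩
        have hwT1 : ¬ w (T+1) ≤ j := by
          intro hle
          have : T + 1 ∈ S := Finset.mem_filter.2 ⟨hT1, hle⟩
          have h2 : T + 1 ≤ T := Finset.le_sup (f := id) this
          omega
        push_neg at hwT1
        have hj' : j ≤ w (T+1) - 1 := by omega
        have haux1 := quant_aux (hmono (Nat.sub_le _ _)) (hgood (T+1) hT1)
        have := le_trans (hmono hj') haux1.1
        push_cast at this ⊢
        linarith
    rw [hFhat, abs_le]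
    constructor <;> linarith
  refine ⟨key, fun hw1 j hj => key j hj ?_⟩
  have h1 : (1:ℕ) ∈ (Finset.Icc (1:ℕ) 8).filter (fun t => w t ≤ j) :=
    Finset.mem_filter.2 ⟨by decide, hw1 j hj⟩
  have := Finset.le_sup (f := id) h1
  show (0:ℝ) < _ / 8
  have : (1:ℕ) ≤ _ := this
  positivity
end
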